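/- Let 1 ≤ k ≤ n−1 be integers and let Γ and Γ' be signed graphs of order n. If Γ and Γ' are switching isomorphic, then their k-token signed graphs F_k(Γ) and F_k(Γ') are switching isomorphic. -/

import Mathlib

open scoped Classical

/-- A signed graph: a simple graph together with a signature assigning a sign `±1`
(an element of `ℤˣ`) to each pair of vertices (only the values on edges are relevant). -/
structure SignedGraph (V : Type*) where
  G : SimpleGraph V
  sign : V → V → ℤˣ
  sign_symm : ∀ u v, sign u v = sign v u

namespace SignedGraph

variable {V W : Type*}

/-- The sign function, as a function on unordered pairs. -/
def esign (Γ : SignedGraph V) : Sym2 V → ℤˣ :=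
  Sym2.lift ⟨Γ.sign, Γ.sign_symm⟩

/-- The sign of a walk: the product of the signs of its edges. -/
def walkSign (Γ : SignedGraph V) {u v : V} (p : Γ.G.Walk u v) : ℤˣ :=
  (p.edges.map Γ.esign).prod

/-- A signed graph is balanced if every cycle is positive. -/
def Balanced (Γ : SignedGraph V) : Prop :=
  ∀ ⦃u : V⦄ (p : Γ.G.Walk u u), p.IsCycle → Γ.walkSign p = 1

/-- Switching at a vertex subset `U`: reverse the sign of every edge with exactly one
endpoint in `U`. -/
noncomputable def switch (Γ : SignedGraph V) (U : Set V) : SignedGraph V where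
  G := Γ.G
  sign u v := (if u ∈ U then (-1 : ℤˣ) else 1) * (if v ∈ U then (-1 : ℤˣ) else 1) * Γ.sign u v
  sign_symm u v := by
    rw [Γ.sign_symm u v, mul_comm (if u ∈ U then (-1 : ℤˣ) else 1) (if v ∈ U then (-1 : ℤˣ) else 1)]

/-- Two signed graphs on the same vertex set are "the same signed graph" when they have the
same underlying graph and the same signature on every edge. -/
def SEq (Γ Γ' : SignedGraph V) : Prop :=
  Γ.G = Γ'.G ∧ ∀ u v, Γ.G.Adj u v → Γ.sign u v = Γ'.sign u v

/-- Switching equivalence of two signed graphs on the same vertex set. -/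
def SwitchEquiv (Γ Γ' : SignedGraph V) : Prop :=
  ∃ U : Set V, (Γ.switch U).SEq Γ'

/-- A sign-preserving isomorphism of signed graphs. -/
structure Iso (Γ : SignedGraph V) (Γ' : SignedGraph W) where
  toEquiv : V ≃ W
  adj_iff : ∀ u v, Γ.G.Adj u v ↔ Γ'.G.Adj (toEquiv u) (toEquiv v)
  sign_eq : ∀ u v, Γ.G.Adj u v → Γ.sign u v = Γ'.sign (toEquiv u) (toEquiv v)

/-- Switching isomorphism: `Γ'` is isomorphic to a switching of `Γ`. -/
def SwitchIso (Γ : SignedGraph V) (Γ' : SignedGraph W) : Prop :=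
  ∃ U : Set V, Nonempty ((Γ.switch U).Iso Γ')

/-- The negation of a signed graph: all edge signs reversed. -/
def neg (Γ : SignedGraph V) : SignedGraph V where
  G := Γ.G
  sign u v := -Γ.sign u v
  sign_symm u v := by rw [Γ.sign_symm]

variable [DecidableEq V]

/-- The underlying graph of the `k`-token graph: vertices are the `k`-subsets of `V`,
with `A ~ B` when `A Δ B = {a, b}`, `a ∈ A`, `b ∈ B` and `a ~ b` in `G`. -/
def tokenAdj (G : SimpleGraph V) (k : ℕ) : SimpleGraph {A : Finset V // A.card = k} where
  Adj A B := ∃ a b, a ∈ A.1 ∧ b ∈ B.1 ∧ G.Adj a b ∧ symmDiff A.1 B.1 = {a, b}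
  symm := by
    refine ⟨?_⟩
    rintro A B ⟨a, b, ha, hb, hab, hs⟩
    exact ⟨b, a, hb, ha, hab.symm, by rw [symmDiff_comm, hs, Finset.pair_comm]⟩
  loopless := by
    refine ⟨?_⟩
    rintro A ⟨a, b, ha, hb, hab, hs⟩
    rw [symmDiff_self] at hs
    have h : a ∈ ({a, b} : Finset V) := Finset.mem_insert_self a {b}
    rw [← hs] at h
    simp at h

/-- The `k`-token signed graph: the edge obtained by moving a token along `ab`
carries the sign of `ab`. -/
def token (Γ : SignedGraph V) (k : ℕ) : SignedGraph {A : Finset V // A.card = k} where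
  G := tokenAdj Γ.G k
  sign A B := ∏ a ∈ A.1 \ B.1, ∏ b ∈ B.1 \ A.1, Γ.sign a b
  sign_symm A B := by
    rw [Finset.prod_comm]
    exact Finset.prod_congr rfl fun b _ => Finset.prod_congr rfl fun a _ => Γ.sign_symm a b

/-- The signed adjacency matrix (over `ℝ`). -/
noncomputable def adjMatrix (Γ : SignedGraph V) [Fintype V] : Matrix V V ℝ :=
  Matrix.of fun u v => if Γ.G.Adj u v then ((Γ.sign u v : ℤ) : ℝ) else 0

/-- The signed Laplacian matrix `L = D - A` (over `ℝ`). -/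
noncomputable def lapMatrix (Γ : SignedGraph V) [Fintype V] : Matrix V V ℝ :=
  Matrix.diagonal (fun v => (Γ.G.degree v : ℝ)) - Γ.adjMatrix

/-- The quantity `ℓ_m(Γ)`. -/
noncomputable def ellm (Γ : SignedGraph V) [Fintype V] (m : ℕ) : ℝ :=
  (∑ r ∈ Finset.range (m + 1),
      ((Γ.G.adjMatrix ℝ ^ r).trace - (Γ.adjMatrix ^ r).trace)) /
  (∑ r ∈ Finset.range (m + 1),
      ((Γ.G.adjMatrix ℝ ^ r).trace + |(Γ.adjMatrix ^ r).trace|))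

/-- The unbalance level `ℓ(Γ) = max {ℓ_{n-1}(Γ), ℓ_n(Γ)}`. -/
noncomputable def unbalanceLevel (Γ : SignedGraph V) [Fintype V] : ℝ :=
  max (Γ.ellm (Fintype.card V - 1)) (Γ.ellm (Fintype.card V))

/-- The frustration index: the minimum number of negative edges whose deletion yields a
balanced signed graph. -/
noncomputable def frustrationIndex (Γ : SignedGraph V) : ℕ :=
  sInf {m : ℕ | ∃ F : Finset (Sym2 V), F.card = m ∧ ↑F ⊆ Γ.G.edgeSet ∧
    (∀ e ∈ F, Γ.esign e = -1) ∧
    Balanced ⟨Γ.G.deleteEdges ↑F, Γ.sign, Γ.sign_symm⟩}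

/-- The signed complement of a balanced signed graph, with respect to a switching function
`s` witnessing balance (`A_σ = S A S`): the signed graph on the complement graph with
adjacency matrix `S Ā S`, i.e. with sign `s u * s v` on each complement edge. -/
def scompl (Γ : SignedGraph V) (s : V → ℤˣ) : SignedGraph V where
  G := Γ.Gᶜ
  sign u v := s u * s v
  sign_symm u v := mul_comm _ _

/-- The real diagonal `±1` matrix associated with `s : V → ℤˣ`. -/
noncomputable def diagS [Fintype V] (s : V → ℤˣ) : Matrix V V ℝ :=
  Matrix.diagonal fun v => ((s v : ℤ) : ℝ)

end SignedGraph

/-- The all-positive signed complete graph on `V`. -/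
def allPos (V : Type*) : SignedGraph V := ⟨⊤, fun _ _ => 1, fun _ _ => rfl⟩

/-- The `(n; 1, k)`-binomial matrix. -/
noncomputable def binomB (V : Type*) [Fintype V] [DecidableEq V] (k : ℕ) :
    Matrix {A : Finset V // A.card = k} V ℝ :=
  Matrix.of fun A v => if v ∈ A.1 then 1 else 0

/-- The `(n; k₁, k₂)`-binomial matrix. -/
noncomputable def binomB2 (V : Type*) [Fintype V] [DecidableEq V] (k₁ k₂ : ℕ) :
    Matrix {A : Finset V // A.card = k₂} {A : Finset V // A.card = k₁} ℝ :=
  Matrix.of fun A X => if X.1 ⊆ A.1 then 1 else 0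


/-!
A `k`-token edge `A ~ B` moves one token along an edge `ab`, so `A \ B = {a}` and `B \ A = {b}`.
Switching `Γ` at `U` multiplies the sign of `ab` by `s(a) s(b)`, where `s = ±1` is the switching
function of `U`. Since `s² = 1`, this factor equals `s(A) s(B)` with `s(A) = ∏_{v ∈ A} s(v)`, the
common part `A ∩ B` cancelling. Hence `F_k(Γ^U)` is `F_k(Γ)` switched at the set of `k`-subsets
meeting `U` in an odd number of vertices, and an isomorphism `Γ^U ≅ Γ'` transports tokens to an
isomorphism `F_k(Γ^U) ≅ F_k(Γ')`.
-/

theorem Finset.sdiff_eq_singleton_and_of_symmDiff_eq_pair {α : Type*} [DecidableEq α]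
    {A B : Finset α} {a b : α} (ha : a ∈ A) (hb : b ∈ B) (h : symmDiff A B = {a, b}) :
    A \ B = {a} ∧ B \ A = {b} := by
  have hmem : ∀ x, (x ∈ A ∧ x ∉ B ∨ x ∈ B ∧ x ∉ A) ↔ x = a ∨ x = b := fun x => by
    simpa [Finset.mem_symmDiff] using congrArg (x ∈ ·) h
  constructor <;> ext x <;> simp only [Finset.mem_sdiff, Finset.mem_singleton] <;>
    grind

theorem Finset.prod_mul_prod_eq_prod_sdiff_mul_prod_sdiff {α M : Type*} [DecidableEq α]
    [CommMonoid M] {f : α → M} (hf : ∀ v, f v * f v = 1) (A B : Finset α) :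
    (∏ v ∈ A, f v) * ∏ v ∈ B, f v = (∏ v ∈ A \ B, f v) * ∏ v ∈ B \ A, f v := by
  have hinter : (∏ v ∈ A ∩ B, f v) * ∏ v ∈ A ∩ B, f v = 1 := by
    rw [← Finset.prod_mul_distrib]
    exact Finset.prod_eq_one fun v _ => hf v
  rw [← Finset.prod_inter_mul_prod_sdiff A B, ← Finset.prod_inter_mul_prod_sdiff B A,
    Finset.inter_comm B A, mul_mul_mul_comm, hinter, one_mul]

namespace SignedGraph

variable {V W : Type*}

def SEq.transIso {Γ₁ Γ₂ : SignedGraph V} {Γ₃ : SignedGraph W} (h : Γ₁.SEq Γ₂)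
    (φ : Γ₂.Iso Γ₃) : Γ₁.Iso Γ₃ where
  toEquiv := φ.toEquiv
  adj_iff u v := h.1 ▸ φ.adj_iff u v
  sign_eq u v huv := (h.2 u v huv).trans (φ.sign_eq u v (h.1 ▸ huv))

def Iso.toGraphIso {Γ : SignedGraph V} {Γ' : SignedGraph W} (φ : Γ.Iso Γ') : Γ.G ≃g Γ'.G :=
  ⟨φ.toEquiv, (φ.adj_iff _ _).symm⟩

section Token

variable [DecidableEq V] [DecidableEq W]

theorem tokenAdj_iff {G : SimpleGraph V} {k : ℕ} {A B : {A : Finset V // A.card = k}} :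
    (tokenAdj G k).Adj A B ↔ ∃ a b, G.Adj a b ∧ A.1 \ B.1 = {a} ∧ B.1 \ A.1 = {b} := by
  constructor
  · rintro ⟨a, b, ha, hb, hab, hs⟩
    exact ⟨a, b, hab, Finset.sdiff_eq_singleton_and_of_symmDiff_eq_pair ha hb hs⟩
  · rintro ⟨a, b, hab, hA, hB⟩
    refine ⟨a, b, (Finset.mem_sdiff.1 (hA ▸ Finset.mem_singleton_self a)).1,
      (Finset.mem_sdiff.1 (hB ▸ Finset.mem_singleton_self b)).1, hab, ?_⟩
    rw [symmDiff_def, Finset.sup_eq_union, hA, hB, Finset.insert_eq]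

theorem token_sign_of_sdiff (Γ : SignedGraph V) {k : ℕ} {A B : {A : Finset V // A.card = k}}
    {a b : V} (hA : A.1 \ B.1 = {a}) (hB : B.1 \ A.1 = {b}) :
    (Γ.token k).sign A B = Γ.sign a b := by
  simp only [token, hA, hB, Finset.prod_singleton]

def tokenEquiv (e : V ≃ W) (k : ℕ) :
    {A : Finset V // A.card = k} ≃ {A : Finset W // A.card = k} :=
  e.finsetCongr.subtypeEquiv fun A => by simp

theorem tokenEquiv_sdiff (e : V ≃ W) {k : ℕ} (A B : {A : Finset V // A.card = k}) :
    (tokenEquiv e k A).1 \ (tokenEquiv e k B).1 = (A.1 \ B.1).map e.toEmbedding := by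
  simp [tokenEquiv, Finset.map_sdiff]

theorem tokenEquiv_sdiff_eq_singleton_iff (e : V ≃ W) {k : ℕ}
    (A B : {A : Finset V // A.card = k}) (a : V) :
    (tokenEquiv e k A).1 \ (tokenEquiv e k B).1 = {e a} ↔ A.1 \ B.1 = {a} := by
  rw [tokenEquiv_sdiff, ← Equiv.coe_toEmbedding, ← Finset.map_singleton e.toEmbedding,
    Finset.map_inj]

def tokenAdjIso {G : SimpleGraph V} {G' : SimpleGraph W} (e : G ≃g G') (k : ℕ) :
    tokenAdj G k ≃g tokenAdj G' k where
  toEquiv := tokenEquiv e.toEquiv k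
  map_rel_iff' {A B} := by
    simp only [tokenAdj_iff, e.surjective.exists, e.map_adj_iff]
    exact exists₂_congr fun a b => and_congr_right' <| and_congr
      (tokenEquiv_sdiff_eq_singleton_iff e.toEquiv A B a)
      (tokenEquiv_sdiff_eq_singleton_iff e.toEquiv B A b)

def Iso.token {Γ : SignedGraph V} {Γ' : SignedGraph W} (φ : Γ.Iso Γ') (k : ℕ) :
    (Γ.token k).Iso (Γ'.token k) where
  toEquiv := tokenEquiv φ.toEquiv k
  adj_iff _ _ := ((tokenAdjIso φ.toGraphIso k).map_adj_iff).symm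
  sign_eq A B hAB := by
    obtain ⟨a, b, hab, hA, hB⟩ := tokenAdj_iff.1 hAB
    rw [token_sign_of_sdiff Γ hA hB, φ.sign_eq a b hab, token_sign_of_sdiff Γ'
      ((tokenEquiv_sdiff_eq_singleton_iff _ A B a).2 hA)
      ((tokenEquiv_sdiff_eq_singleton_iff _ B A b).2 hB)]

end Token

noncomputable def switchSign (U : Set V) (v : V) : ℤˣ := if v ∈ U then -1 else 1

theorem switch_sign (Γ : SignedGraph V) (U : Set V) (u v : V) :
    (Γ.switch U).sign u v = switchSign U u * switchSign U v * Γ.sign u v := rfl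

theorem switchSign_mul_self (U : Set V) (v : V) : switchSign U v * switchSign U v = 1 :=
  Int.units_mul_self _

theorem prod_switchSign (U : Set V) (A : Finset V) :
    ∏ v ∈ A, switchSign U v = (-1) ^ {v ∈ A | v ∈ U}.card := by
  simp only [switchSign, Finset.prod_ite, Finset.prod_const, one_pow, mul_one]

def tokenSwitchSet (U : Set V) (k : ℕ) : Set {A : Finset V // A.card = k} :=
  {A | Odd {v ∈ A.1 | v ∈ U}.card}

theorem switchSign_tokenSwitchSet (U : Set V) {k : ℕ} (A : {A : Finset V // A.card = k}) :
    switchSign (tokenSwitchSet U k) A = ∏ v ∈ A.1, switchSign U v := by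
  rw [prod_switchSign, switchSign]
  split_ifs with hodd
  · exact hodd.neg_one_pow.symm
  · exact (Nat.not_odd_iff_even.1 hodd).neg_one_pow.symm

variable [DecidableEq V] in
theorem token_switch_sEq (Γ : SignedGraph V) (U : Set V) (k : ℕ) :
    ((Γ.token k).switch (tokenSwitchSet U k)).SEq ((Γ.switch U).token k) := by
  refine ⟨rfl, fun A B hAB => ?_⟩
  obtain ⟨a, b, -, hA, hB⟩ := tokenAdj_iff.1 hAB
  rw [switch_sign, switchSign_tokenSwitchSet, switchSign_tokenSwitchSet,
    Finset.prod_mul_prod_eq_prod_sdiff_mul_prod_sdiff (switchSign_mul_self U),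
    token_sign_of_sdiff _ hA hB, token_sign_of_sdiff _ hA hB, hA, hB,
    Finset.prod_singleton, Finset.prod_singleton, switch_sign]

end SignedGraph

theorem switchIso_token_general {V W : Type*} [DecidableEq V] [DecidableEq W]
    (k : ℕ)
    (Γ : SignedGraph V) (Γ' : SignedGraph W) (h : Γ.SwitchIso Γ') :
    (Γ.token k).SwitchIso (Γ'.token k) := by
  obtain ⟨U, ⟨φ⟩⟩ := h
  exact ⟨SignedGraph.tokenSwitchSet U k,
    ⟨(SignedGraph.token_switch_sEq Γ U k).transIso (φ.token k)⟩⟩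

/-- switching isomorphic signed graphs of order `n` have switching isomorphic
`k`-token signed graphs. -/
theorem switchIso_token {V W : Type*} [Fintype V] [Fintype W] [DecidableEq V] [DecidableEq W]
    (n k : ℕ) (hV : Fintype.card V = n) (hW : Fintype.card W = n)
    (hk1 : 1 ≤ k) (hk2 : k ≤ n - 1)
    (Γ : SignedGraph V) (Γ' : SignedGraph W) (h : Γ.SwitchIso Γ') :
    (Γ.token k).SwitchIso (Γ'.token k) :=
  switchIso_token_general k Γ Γ' h
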